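/- Let I be a {0,1}^d-valued random vector, and let X and Y be obtained by the FGM construction with the same distribution of the Bernoulli vector but possibly different marginals: X_k = (1−I_k)X^[1]_k + I_k X^[2]_k with X^[1]_k of cdf 1−(1−F_k)^2 and X^[2]_k of cdf F_k^2, and Y_k = (1−I'_k)Y^[1]_k + I'_k Y^[2]_k with I' having the same distribution as I, Y^[1]_k of cdf 1−(1−G_k)^2 and Y^[2]_k of cdf G_k^2, each construction having its 2d+1 random elements mutually independent. If G_k(x) ≤ F_k(x) for all x ∈ ℝ and all k ∈ {1,...,d} (i.e., X_k ≤_{st} Y_k for each k), then E[ψ(X)] ≤ E[ψ(Y)] for every bounded Borel-measurable function ψ : ℝ^d → ℝ that is nondecreasing in each component; in particular X ≤_{st} Y in the multivariate usual stochastic order, and X_1 + ··· + X_d ≤_{st} Y_1 + ··· + Y_d. -/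

import Mathlib

open MeasureTheory ProbabilityTheory

/-- Codomains of the `2d+1` random elements in the FGM construction. -/
def fgmType (d : ℕ) : Option (Fin d × Fin 2) → Type
  | none => Fin d → Fin 2
  | some _ => ℝ

instance fgmTypeMeasurableSpace (d : ℕ) (o : Option (Fin d × Fin 2)) :
    MeasurableSpace (fgmType d o) := by
  cases o with
  | none => exact (inferInstance : MeasurableSpace (Fin d → Fin 2))
  | some p => exact (inferInstance : MeasurableSpace ℝ)

/-- The family consisting of the Bernoulli random vector `I` together with the `2d`
order-statistic components `X j k` (`j = 0`: minimum, `j = 1`: maximum). -/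
def fgmFamily {Ω : Type*} (d : ℕ) (I : Ω → Fin d → Fin 2)
    (X : Fin 2 → Fin d → Ω → ℝ) : (o : Option (Fin d × Fin 2)) → Ω → fgmType d o
  | none => I
  | some p => X p.2 p.1

/-! Since `I_k ∈ {0, 1}`, the FGM vector is the selection `X_k = X^[I_k]_k`, a function of the
`2d+1` independent inputs which is nondecreasing in each real input. By independence the joint
law of the inputs is the product of their laws. The Bernoulli factors of the two constructions
agree, and since `t ↦ 1 - (1 - t)²` and `t ↦ t²` are nondecreasing on `[0, 1]`, `G_k ≤ F_k` makes
every real factor of the second construction stochastically larger than the corresponding one of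
the first. Swapping the factors of a product measure one at a time for stochastically larger ones
can only increase the integral of a function that is nondecreasing in those coordinates: on a
single coordinate this is the layer-cake formula together with the fact that upper sets of `ℝ`
are rays. -/

open Set
open scoped ENNReal

section StochasticOrder

variable {μ ν : Measure ℝ}

theorem measure_Iio_le_of_forall_measure_Iic_le (h : ∀ x, ν (Iic x) ≤ μ (Iic x)) (x : ℝ) :
    ν (Iio x) ≤ μ (Iio x) := by
  obtain ⟨u, hu_mono, hu_lt, hu_lim⟩ := exists_seq_strictMono_tendsto x
  have hmono : Monotone fun n => Iic (u n) := fun m n hmn =>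
    Iic_subset_Iic.2 (hu_mono.monotone hmn)
  rw [← iUnion_Iic_eq_Iio_of_lt_of_tendsto hu_lt hu_lim, hmono.measure_iUnion,
    hmono.measure_iUnion]
  exact iSup_mono fun n => h (u n)

theorem measure_le_measure_of_isUpperSet [IsProbabilityMeasure μ] [IsProbabilityMeasure ν]
    (h : ∀ x, ν (Iic x) ≤ μ (Iic x)) {S : Set ℝ} (hS : IsUpperSet S) : μ S ≤ ν S := by
  rcases S.eq_empty_or_nonempty with rfl | hne
  · simp
  by_cases hbdd : BddBelow S
  swap
  · have : S = univ := eq_univ_of_forall fun y =>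
      let ⟨s, hs, hsy⟩ := not_bddBelow_iff.1 hbdd y
      hS hsy.le hs
    simp [this]
  have hIci : S ⊆ Ici (sInf S) := fun s hs => csInf_le hbdd hs
  by_cases hmem : sInf S ∈ S
  · rw [hIci.antisymm (hS.Ici_subset hmem), ← compl_Iio,
      prob_compl_eq_one_sub measurableSet_Iio, prob_compl_eq_one_sub measurableSet_Iio]
    exact tsub_le_tsub_left (measure_Iio_le_of_forall_measure_Iic_le h _) 1
  · have hIoi : Ioi (sInf S) ⊆ S := fun y hy =>
      let ⟨s, hs, hsy⟩ := (csInf_lt_iff hbdd hne).1 hy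
      hS hsy.le hs
    have hS_eq : S = Ioi (sInf S) :=
      hIoi.antisymm' fun s hs => (hIci hs).lt_of_ne fun (e : sInf S = s) => hmem (e ▸ hs)
    rw [hS_eq, ← compl_Iic, prob_compl_eq_one_sub measurableSet_Iic,
      prob_compl_eq_one_sub measurableSet_Iic]
    exact tsub_le_tsub_left (h _) 1

theorem lintegral_le_lintegral_of_forall_measure_Iic_le [IsProbabilityMeasure μ]
    [IsProbabilityMeasure ν] (h : ∀ x, ν (Iic x) ≤ μ (Iic x)) {g : ℝ → ℝ}
    (hg0 : ∀ x, 0 ≤ g x) (hg : Monotone g) :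
    ∫⁻ x, ENNReal.ofReal (g x) ∂μ ≤ ∫⁻ x, ENNReal.ofReal (g x) ∂ν := by
  rw [lintegral_eq_lintegral_meas_lt μ (.of_forall hg0) hg.measurable.aemeasurable,
    lintegral_eq_lintegral_meas_lt ν (.of_forall hg0) hg.measurable.aemeasurable]
  exact lintegral_mono fun t =>
    measure_le_measure_of_isUpperSet h fun a b hab ha => ha.trans_le (hg hab)

end StochasticOrder

theorem integral_le_integral_of_lintegral_ofReal_add_le {α : Type*} [MeasurableSpace α]
    {μ ν : Measure α} [IsProbabilityMeasure μ] [IsProbabilityMeasure ν] {f : α → ℝ} {C : ℝ}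
    (hf : Measurable f) (hC : ∀ a, |f a| ≤ C)
    (h : ∫⁻ a, ENNReal.ofReal (f a + C) ∂μ ≤ ∫⁻ a, ENNReal.ofReal (f a + C) ∂ν) :
    ∫ a, f a ∂μ ≤ ∫ a, f a ∂ν := by
  have hint : ∀ (ρ : Measure α) [IsProbabilityMeasure ρ], Integrable f ρ :=
    fun ρ _ => Integrable.of_bound hf.aestronglyMeasurable C (ae_of_all _ hC)
  have hshift : ∀ (ρ : Measure α) [IsProbabilityMeasure ρ],
      ∫ a, f a ∂ρ + C = (∫⁻ a, ENNReal.ofReal (f a + C) ∂ρ).toReal := fun ρ _ => by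
    rw [← integral_eq_lintegral_of_nonneg_ae
        (ae_of_all _ fun a => show 0 ≤ f a + C by linarith [(abs_le.1 (hC a)).1])
        ((hint ρ).add (integrable_const C)).1, integral_add (hint ρ) (integrable_const C)]
    simp
  have hfin : ∫⁻ a, ENNReal.ofReal (f a + C) ∂ν ≠ ⊤ :=
    ((hint ν).add (integrable_const C)).lintegral_lt_top.ne
  have := ENNReal.toReal_mono hfin h
  linarith [hshift μ, hshift ν]

section Pi

variable {δ : Type*} [DecidableEq δ] {π : δ → Type*} [∀ i, MeasurableSpace (π i)]

theorem lmarginal_congr_measure {μ ν : ∀ i, Measure (π i)} {s : Finset δ}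
    (h : ∀ i ∈ s, μ i = ν i) (f : (∀ i, π i) → ℝ≥0∞) :
    (∫⋯∫⁻_s, f ∂μ) = ∫⋯∫⁻_s, f ∂ν := by
  have : (fun i : s => μ i) = fun i : s => ν i := funext fun i => h i i.2
  unfold lmarginal
  rw [this]

theorem lintegral_pi_le_lintegral_pi [Fintype δ] (μ ν : ∀ i, Measure (π i))
    [∀ i, IsProbabilityMeasure (μ i)] [∀ i, IsProbabilityMeasure (ν i)]
    {f : (∀ i, π i) → ℝ≥0∞} (hf : Measurable f)
    (h : ∀ i x, ∫⁻ t, f (Function.update x i t) ∂μ i ≤ ∫⁻ t, f (Function.update x i t) ∂ν i) :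
    ∫⁻ x, f x ∂Measure.pi μ ≤ ∫⁻ x, f x ∂Measure.pi ν := by
  have hmarg : ∀ s : Finset δ, ∫⋯∫⁻_s, f ∂μ ≤ ∫⋯∫⁻_s, f ∂ν := by
    intro s
    induction s using Finset.induction_on with
    | empty => simp
    | @insert i s hi IH =>
      intro x
      -- `κ` integrates the new coordinate against `μ i` and the old ones against `ν`
      let κ : ∀ j, Measure (π j) := Function.update ν i (μ i)
      have : ∀ j, IsProbabilityMeasure (κ j) := fun j => by
        by_cases hj : j = i
        · subst hj; simp only [κ, Function.update_self]; infer_instance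
        · simp only [κ, Function.update_of_ne hj]; infer_instance
      have hκi : κ i = μ i := Function.update_self _ _ _
      have hκs : ∀ j ∈ s, κ j = ν j := fun j hj =>
        Function.update_of_ne (ne_of_mem_of_not_mem hj hi) _ _
      calc (∫⋯∫⁻_insert i s, f ∂μ) x
          = ∫⁻ t, (∫⋯∫⁻_s, f ∂μ) (Function.update x i t) ∂μ i := lmarginal_insert f hf hi x
        _ ≤ ∫⁻ t, (∫⋯∫⁻_s, f ∂ν) (Function.update x i t) ∂μ i := lintegral_mono fun t => IH _
        _ = (∫⋯∫⁻_insert i s, f ∂κ) x := by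
          rw [lmarginal_insert f hf hi x, hκi, lmarginal_congr_measure hκs f]
        _ = (∫⋯∫⁻_s, (fun z => ∫⁻ t, f (Function.update z i t) ∂μ i) ∂ν) x := by
          rw [lmarginal_insert' f hf hi, hκi, lmarginal_congr_measure hκs]
        _ ≤ (∫⋯∫⁻_s, (fun z => ∫⁻ t, f (Function.update z i t) ∂ν i) ∂ν) x :=
          lmarginal_mono (fun z => h i z) x
        _ = (∫⋯∫⁻_insert i s, f ∂ν) x := by rw [← lmarginal_insert' f hf hi]
  have : ∀ i, Nonempty (π i) := fun i => nonempty_of_isProbabilityMeasure (μ i)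
  let x₀ : ∀ i, π i := fun i => Classical.arbitrary _
  rw [lintegral_eq_lmarginal_univ x₀, lintegral_eq_lmarginal_univ x₀]
  exact hmarg Finset.univ x₀

end Pi

theorem Fin.one_sub_val_mul_add_val_mul (i : Fin 2) (f : Fin 2 → ℝ) :
    (1 - ((i : ℕ) : ℝ)) * f 0 + ((i : ℕ) : ℝ) * f 1 = f i := by
  fin_cases i <;> simp

section FGM

variable {d : ℕ}

def fgmSelect (v : ∀ o, fgmType d o) (k : Fin d) : ℝ := v (some (k, v none k))

theorem measurable_fgmSelect : Measurable (fgmSelect (d := d)) := by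
  refine measurable_pi_lambda _ fun k => ?_
  have : Measurable fun q : (∀ o, fgmType d o) × Fin 2 => (q.1 (some (k, q.2)) : ℝ) :=
    measurable_from_prod_countable_left fun j => measurable_pi_apply (some (k, j))
  exact this.comp (measurable_id.prodMk ((measurable_pi_apply k).comp (measurable_pi_apply none)))

theorem monotone_fgmSelect_update (x : ∀ o, fgmType d o) (p : Fin d × Fin 2) :
    Monotone fun t : ℝ => fgmSelect (Function.update x (some p) t) := by
  intro t t' htt' k
  -- `fgmType d (some _)` is `ℝ` only after unfolding, so the order on `ℝ` is named explicitly
  change @LE.le ℝ _ (Function.update x (some p) t (some (k, x none k)))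
    (Function.update x (some p) t' (some (k, x none k)))
  by_cases hp : (k, x none k) = p
  · have e : ∀ s : ℝ, @Eq ℝ (Function.update x (some p) s (some (k, x none k))) s := by
      subst hp; exact fun s => Function.update_self _ _ _
    exact (e t).trans_le (htt'.trans_eq (e t').symm)
  · have e : ∀ s : ℝ, @Eq ℝ (Function.update x (some p) s (some (k, x none k)))
        (x (some (k, x none k))) :=
      fun s => Function.update_of_ne ((Option.some_injective _).ne hp) _ _
    exact ((e t).trans (e t').symm).le

theorem measurable_fgmFamily {Ω : Type*} [MeasurableSpace Ω] {I : Ω → Fin d → Fin 2}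
    {X : Fin 2 → Fin d → Ω → ℝ} (hI : Measurable I) (hX : ∀ j k, Measurable (X j k)) :
    ∀ o, Measurable (fgmFamily d I X o)
  | none => hI
  | some (k, j) => hX j k

theorem measure_le_measure_of_fgm_cdf {Ω : Type*} [MeasurableSpace Ω] {P : Measure Ω}
    [IsProbabilityMeasure P] {X Y : Fin 2 → Ω → ℝ} {F G : ℝ → ℝ}
    (hXmin : ∀ x, (P {ω | X 0 ω ≤ x}).toReal = 1 - (1 - F x) ^ 2)
    (hXmax : ∀ x, (P {ω | X 1 ω ≤ x}).toReal = F x ^ 2)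
    (hYmin : ∀ x, (P {ω | Y 0 ω ≤ x}).toReal = 1 - (1 - G x) ^ 2)
    (hYmax : ∀ x, (P {ω | Y 1 ω ≤ x}).toReal = G x ^ 2)
    (hGF : ∀ x, G x ≤ F x) (j : Fin 2) (x : ℝ) :
    P {ω | Y j ω ≤ x} ≤ P {ω | X j ω ≤ x} := by
  have hF : F x ≤ 1 := by
    have : (P {ω | X 1 ω ≤ x}).toReal ≤ 1 := measureReal_le_one
    nlinarith [hXmax x]
  have hG : 0 ≤ G x := by
    have : 0 ≤ (P {ω | Y 0 ω ≤ x}).toReal := ENNReal.toReal_nonneg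
    nlinarith [hYmin x]
  rw [← ENNReal.toReal_le_toReal (measure_ne_top _ _) (measure_ne_top _ _)]
  fin_cases j
  · simp only [Fin.zero_eta, hXmin, hYmin]
    nlinarith [hGF x]
  · simp only [Fin.mk_one, hXmax, hYmax]
    nlinarith [hGF x]

theorem integral_fgmSelect_le (μ ν : ∀ o, Measure (fgmType d o))
    [hμ : ∀ o, IsProbabilityMeasure (μ o)] [hν : ∀ o, IsProbabilityMeasure (ν o)]
    (hnone : μ none = ν none)
    (hcdf : ∀ p (x : ℝ), ν (some p) (Iic x : Set ℝ) ≤ μ (some p) (Iic x : Set ℝ))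
    {ψ : (Fin d → ℝ) → ℝ} (hψ : Measurable ψ) (hbdd : ∃ C, ∀ x, |ψ x| ≤ C) (hmono : Monotone ψ) :
    ∫ v, ψ (fgmSelect v) ∂Measure.pi μ ≤ ∫ v, ψ (fgmSelect v) ∂Measure.pi ν := by
  obtain ⟨C, hC⟩ := hbdd
  have hm : Measurable fun v => ψ (fgmSelect v) := hψ.comp measurable_fgmSelect
  refine integral_le_integral_of_lintegral_ofReal_add_le hm (fun v => hC _) ?_
  refine lintegral_pi_le_lintegral_pi μ ν (hm.add_const C).ennreal_ofReal ?_
  rintro (_ | p) x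
  · rw [hnone]
  · exact @lintegral_le_lintegral_of_forall_measure_Iic_le _ _ (hμ _) (hν _) (hcdf p) _
      (fun t => by linarith [(abs_le.1 (hC (fgmSelect (Function.update x (some p) t)))).1])
      fun t t' htt' => by linarith [hmono (monotone_fgmSelect_update x p htt')]

theorem integral_fgm_eq_integral_pi {Ω : Type*} [MeasurableSpace Ω] (P : Measure Ω)
    [IsProbabilityMeasure P] {I : Ω → Fin d → Fin 2} {X : Fin 2 → Fin d → Ω → ℝ}
    (hI : Measurable I) (hX : ∀ j k, Measurable (X j k))
    (hIndep : iIndepFun (fgmFamily d I X) P) {ψ : (Fin d → ℝ) → ℝ} (hψ : Measurable ψ) :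
    ∫ ω, ψ (fun k => (1 - ((I ω k : ℕ) : ℝ)) * X 0 k ω + ((I ω k : ℕ) : ℝ) * X 1 k ω) ∂P
      = ∫ v, ψ (fgmSelect v) ∂Measure.pi fun o => P.map (fgmFamily d I X o) := by
  have hfam := measurable_fgmFamily hI hX
  have hm : Measurable fun v => ψ (fgmSelect v) := hψ.comp measurable_fgmSelect
  rw [← hIndep.map_fun_eq_pi_map fun o => (hfam o).aemeasurable,
    integral_map (measurable_pi_lambda _ hfam).aemeasurable hm.aestronglyMeasurable]
  exact integral_congr_ae (ae_of_all _ fun ω => congrArg ψ (funext fun k =>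
    Fin.one_sub_val_mul_add_val_mul (I ω k) (X · k ω)))

end FGM

/-- Proposition 7.4 and (7.3): if two FGM random vectors share the
same Bernoulli vector distribution (the same FGM copula) and the marginals are ordered
(`G_k ≤ F_k` pointwise, i.e. `X_k ≼_st Y_k`), then the vectors are ordered in the
multivariate usual stochastic order and so are the aggregate rvs. -/
theorem fgm_usual_stochastic_order {Ω : Type*} [MeasurableSpace Ω]
    (P : Measure Ω) [IsProbabilityMeasure P] (d : ℕ) (F G : Fin d → ℝ → ℝ)
    (I I' : Ω → Fin d → Fin 2) (X Y : Fin 2 → Fin d → Ω → ℝ)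
    (hI : Measurable I) (hI' : Measurable I')
    (hX : ∀ j k, Measurable (X j k)) (hY : ∀ j k, Measurable (Y j k))
    (hIndep : iIndepFun (fgmFamily d I X) P)
    (hIndep' : iIndepFun (fgmFamily d I' Y) P)
    (hsame : ∀ i : Fin d → Fin 2, P {ω | I ω = i} = P {ω | I' ω = i})
    (hXcdf_min : ∀ k x, (P {ω | X 0 k ω ≤ x}).toReal = 1 - (1 - F k x) ^ 2)
    (hXcdf_max : ∀ k x, (P {ω | X 1 k ω ≤ x}).toReal = (F k x) ^ 2)
    (hYcdf_min : ∀ k x, (P {ω | Y 0 k ω ≤ x}).toReal = 1 - (1 - G k x) ^ 2)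
    (hYcdf_max : ∀ k x, (P {ω | Y 1 k ω ≤ x}).toReal = (G k x) ^ 2)
    (hGF : ∀ k x, G k x ≤ F k x) :
    (∀ ψ : (Fin d → ℝ) → ℝ, Measurable ψ → (∃ C : ℝ, ∀ x, |ψ x| ≤ C) →
      (∀ a b : Fin d → ℝ, (∀ k, a k ≤ b k) → ψ a ≤ ψ b) →
      ∫ ω, ψ (fun k =>
          (1 - ((I ω k : ℕ) : ℝ)) * X 0 k ω + ((I ω k : ℕ) : ℝ) * X 1 k ω) ∂P
        ≤ ∫ ω, ψ (fun k =>
            (1 - ((I' ω k : ℕ) : ℝ)) * Y 0 k ω + ((I' ω k : ℕ) : ℝ) * Y 1 k ω) ∂P)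
    ∧ (∀ φ : ℝ → ℝ, Measurable φ → (∃ C : ℝ, ∀ x, |φ x| ≤ C) → Monotone φ →
      ∫ ω, φ (∑ k,
          ((1 - ((I ω k : ℕ) : ℝ)) * X 0 k ω + ((I ω k : ℕ) : ℝ) * X 1 k ω)) ∂P
        ≤ ∫ ω, φ (∑ k,
            ((1 - ((I' ω k : ℕ) : ℝ)) * Y 0 k ω + ((I' ω k : ℕ) : ℝ) * Y 1 k ω)) ∂P) := by
  have := fun o =>
    Measure.isProbabilityMeasure_map (μ := P) (measurable_fgmFamily hI hX o).aemeasurable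
  have := fun o =>
    Measure.isProbabilityMeasure_map (μ := P) (measurable_fgmFamily hI' hY o).aemeasurable
  have hlaw_I : P.map I = P.map I' := Measure.ext_of_singleton fun i => by
    rw [Measure.map_apply hI (measurableSet_singleton i),
      Measure.map_apply hI' (measurableSet_singleton i)]
    exact hsame i
  have hvec : ∀ ψ : (Fin d → ℝ) → ℝ, Measurable ψ → (∃ C : ℝ, ∀ x, |ψ x| ≤ C) → Monotone ψ →
      ∫ ω, ψ (fun k => (1 - ((I ω k : ℕ) : ℝ)) * X 0 k ω + ((I ω k : ℕ) : ℝ) * X 1 k ω) ∂P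
        ≤ ∫ ω, ψ (fun k =>
            (1 - ((I' ω k : ℕ) : ℝ)) * Y 0 k ω + ((I' ω k : ℕ) : ℝ) * Y 1 k ω) ∂P := by
    intro ψ hψ hbdd hmono
    rw [integral_fgm_eq_integral_pi P hI hX hIndep hψ,
      integral_fgm_eq_integral_pi P hI' hY hIndep' hψ]
    refine integral_fgmSelect_le _ _ hlaw_I (fun ⟨k, j⟩ x => ?_) hψ hbdd hmono
    show P.map (Y j k) (Iic x) ≤ P.map (X j k) (Iic x)
    rw [Measure.map_apply (hY j k) measurableSet_Iic, Measure.map_apply (hX j k) measurableSet_Iic]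
    exact measure_le_measure_of_fgm_cdf (X := (X · k)) (Y := (Y · k))
      (hXcdf_min k) (hXcdf_max k) (hYcdf_min k) (hYcdf_max k) (hGF k) j x
  refine ⟨fun ψ hψ hbdd hmono => hvec ψ hψ hbdd fun a b => hmono a b, ?_⟩
  rintro φ hφ ⟨C, hC⟩ hmono
  have hsum : Measurable fun x : Fin d → ℝ => ∑ k, x k :=
    Finset.measurable_sum _ fun k _ => measurable_pi_apply k
  exact hvec (fun x => φ (∑ k, x k)) (hφ.comp hsum) ⟨C, fun x => hC _⟩
    fun a b hab => hmono (Finset.sum_le_sum fun k _ => hab k)
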